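/- Let Γ be an infinite group, K ⊴ Γ a normal subgroup of finite index, and E an equivalence relation on X. For x ∈ X^Γ, let x' ∈ (X^R)^K be the preimage of x under the bijection f (where R is a finite set of coset representatives). Then the E^[Γ]-class of x is determined by the (E^R)^[K]-class of x': if x'₁ and x'₂ are (E^R)^[K]-equivalent then f(x'₁) and f(x'₂) are E^[Γ]-equivalent. -/

import Mathlib

section CosetDecomposition

variable {Γ : Type*} [Group Γ] {K : Subgroup Γ} {R : Set Γ} {κ : Γ → K} {ρ : Γ → R}

theorem decomp_mul_left (hdec : ∀ γ : Γ, (κ γ : Γ) * (ρ γ : Γ) = γ)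
    (huniq : ∀ (k : K) (a : R), κ ((k : Γ) * (a : Γ)) = k ∧ ρ ((k : Γ) * (a : Γ)) = a)
    (k : K) (γ : Γ) : κ (k * γ) = k * κ γ ∧ ρ (k * γ) = ρ γ := by
  have hkγ : (k : Γ) * γ = ((k * κ γ : K) : Γ) * (ρ γ : Γ) := by
    rw [Subgroup.coe_mul, mul_assoc, hdec]
  rw [hkγ]
  exact huniq _ _

end CosetDecomposition

theorem stmt19_general {Γ X : Type*} [Group Γ] (K : Subgroup Γ)
    (R : Set Γ) (E : X → X → Prop)
    (κ : Γ → K) (ρ : Γ → R)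
    (hdec : ∀ γ : Γ, ((κ γ : Γ) * (ρ γ : Γ) = γ))
    (huniq : ∀ (k : K) (a : R), κ ((k : Γ) * (a : Γ)) = k ∧ ρ ((k : Γ) * (a : Γ)) = a)
    (f : (K → R → X) → (Γ → X))
    (hf : ∀ (x : K → R → X) (γ : Γ), f x γ = x (κ γ) (ρ γ))
    (x y : K → R → X)
    (hxy : ∃ ζ : K, ∀ (γ : K) (a : R), E (x (ζ⁻¹ * γ) a) (y γ a)) :
    ∃ δ : Γ, ∀ γ : Γ, E (f x (δ⁻¹ * γ)) (f y γ) := by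
  obtain ⟨ζ, hζ⟩ := hxy
  refine ⟨ζ, fun γ => ?_⟩
  obtain ⟨hκ, hρ⟩ := decomp_mul_left hdec huniq ζ⁻¹ γ
  rw [hf, hf, ← Subgroup.coe_inv, hκ, hρ]
  exact hζ (κ γ) (ρ γ)

/-- For Γ infinite, The coset-decomposition map `f` is a homomorphism from the jump
`(E^R)^[K]` to the jump `E^[Γ]`. -/
theorem stmt19 {Γ X : Type*} [Group Γ] [Infinite Γ] (K : Subgroup Γ) [K.Normal] (hK : K.index ≠ 0)
    (R : Set Γ) (hR : R.Finite) (E : X → X → Prop) (hE : Equivalence E)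
    (κ : Γ → K) (ρ : Γ → R)
    (hdec : ∀ γ : Γ, ((κ γ : Γ) * (ρ γ : Γ) = γ))
    (huniq : ∀ (k : K) (a : R), κ ((k : Γ) * (a : Γ)) = k ∧ ρ ((k : Γ) * (a : Γ)) = a)
    (f : (K → R → X) → (Γ → X))
    (hf : ∀ (x : K → R → X) (γ : Γ), f x γ = x (κ γ) (ρ γ))
    (x y : K → R → X)
    (hxy : ∃ ζ : K, ∀ (γ : K) (a : R), E (x (ζ⁻¹ * γ) a) (y γ a)) :
    ∃ δ : Γ, ∀ γ : Γ, E (f x (δ⁻¹ * γ)) (f y γ) :=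
  stmt19_general K R E κ ρ hdec huniq f hf x y hxy
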